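/- Let 0 < ν < √(3/2) and let A be the soliton on finite background, and let τ̂ ∈ ℝ satisfy A(0,τ̂) = 0. Then the local wavenumber of the SFB wave field is unbounded at the singular point: the function τ ↦ Im(conj(A(0,τ))·(∂ξA)(0,τ))/|A(0,τ)|², defined for τ near τ̂ with A(0,τ) ≠ 0, is unbounded as τ → τ̂. Consequently the Chu–Mei quotient of the SFB is unbounded at its singular points. -/

import Mathlib

open Real Filter Topology

/-- Benjamin–Feir growth rate `σ = ν√(2−ν²)`. -/
noncomputable def sfbSigma (ν : ℝ) : ℝ := ν * Real.sqrt (2 - ν ^ 2)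

/-- Displaced amplitude `G(ξ,τ) = P(ξ)/(Q(ξ) − σ cos(ντ))` of the SFB, with
`P(ξ) = ν√2·√(2ν²cosh²(σξ) − σ²)` and `Q(ξ) = ν√2·cosh(σξ)`. -/
noncomputable def sfbG (ν ξ τ : ℝ) : ℝ :=
  (ν * Real.sqrt 2 * Real.sqrt (2 * ν ^ 2 * Real.cosh (sfbSigma ν * ξ) ^ 2 - sfbSigma ν ^ 2)) /
  (ν * Real.sqrt 2 * Real.cosh (sfbSigma ν * ξ) - sfbSigma ν * Real.cos (ν * τ))

/-- SFB phase `φ(ξ) = arctan(−(σ/ν²) tanh(σξ))`. -/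
noncomputable def sfbPhi (ν ξ : ℝ) : ℝ :=
  Real.arctan (-(sfbSigma ν / ν ^ 2) * Real.tanh (sfbSigma ν * ξ))

/-- The soliton on finite background: `A(ξ,τ) = e^{−iξ}(G(ξ,τ)e^{iφ(ξ)} − 1)`. -/
noncomputable def sfbA (ν ξ τ : ℝ) : ℂ :=
  Complex.exp (-Complex.I * (ξ : ℂ)) *
    ((sfbG ν ξ τ : ℂ) * Complex.exp (Complex.I * (sfbPhi ν ξ : ℂ)) - 1)


/-!
On the line `ξ = 0` the phase `φ` vanishes and `G` is stationary in `ξ` (it depends on `ξ` only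
through `cosh (σ ξ)`), so `A(0,τ) = G(0,τ) - 1` is real and `∂ξA(0,τ) = i (1 - G - G σ²/ν²)`.
Hence `|k(τ)| = |1 - G - G σ²/ν²| / |G - 1|`. At a singular point `G(0,τ₀) = 1`, so the numerator
tends to `σ²/ν² > 0` while the denominator tends to `0`; it does not vanish near `τ₀` because
`G(0,τ)` is a strictly monotone function of `cos (ν τ)` and `sin (ν τ₀) ≠ 0`, the latter failing
only for `ν² = 3/2`, where the singular points sit at `cos (ν τ₀) = -1`.
-/

theorem Filter.Tendsto.abs_div_abs_atTop {α : Type*} {l : Filter α} {f g : α → ℝ} {c : ℝ}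
    (hf : Tendsto f l (𝓝 c)) (hc : c ≠ 0) (hg : Tendsto g l (𝓝 0))
    (hg₀ : ∀ᶠ x in l, g x ≠ 0) :
    Tendsto (fun x => |f x| / |g x|) l atTop := by
  have hinv : Tendsto (fun x => |g x|⁻¹) l atTop := by
    refine Tendsto.inv_tendsto_nhdsGT_zero (tendsto_nhdsWithin_iff.mpr ⟨?_, ?_⟩)
    · simpa using hg.abs
    · filter_upwards [hg₀] with x hx using abs_pos.mpr hx
  simpa only [div_eq_mul_inv] using hf.abs.pos_mul_atTop (abs_pos.mpr hc) hinv

theorem abs_im_conj_ofReal_mul_I_ofReal_div (a b : ℝ) :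
    |((starRingEnd ℂ) (a : ℂ) * (Complex.I * b)).im| / ‖(a : ℂ)‖ ^ 2 = |b| / |a| := by
  rcases eq_or_ne a 0 with rfl | ha
  · simp
  · simp only [Complex.conj_ofReal, Complex.norm_real, Real.norm_eq_abs, Complex.mul_im,
      Complex.ofReal_re, Complex.ofReal_im, Complex.I_re, Complex.I_im, Complex.mul_re]
    field_simp
    simp [abs_mul]

theorem hasDerivAt_comp_cosh_mul_zero {f : ℝ → ℝ} (hf : DifferentiableAt ℝ f 1) (c : ℝ) :
    HasDerivAt (fun ξ => f (cosh (c * ξ))) 0 0 := by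
  have hcosh : HasDerivAt (fun ξ => cosh (c * ξ)) (sinh (c * 0) * c) 0 :=
    (hasDerivAt_cosh _).comp 0 ((hasDerivAt_id 0).const_mul c |>.congr_deriv (mul_one c))
  simpa [Function.comp_def] using hf.hasDerivAt.comp_of_eq 0 hcosh (by simp)

theorem hasDerivAt_tanh_mul_zero (c : ℝ) : HasDerivAt (fun ξ => tanh (c * ξ)) c 0 := by
  have hlin : HasDerivAt (fun ξ : ℝ => c * ξ) c 0 :=
    (hasDerivAt_id 0).const_mul c |>.congr_deriv (mul_one c)
  have hquot := ((hasDerivAt_sinh _).comp 0 hlin).div ((hasDerivAt_cosh _).comp 0 hlin)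
    (cosh_pos (c * 0)).ne'
  rw [show (fun ξ => tanh (c * ξ)) = (fun ξ => sinh (c * ξ)) / fun ξ => cosh (c * ξ) from
    funext fun ξ => tanh_eq_sinh_div_cosh _]
  exact hquot.congr_deriv (by simp)

theorem hasDerivAt_cexp_neg_I_mul_sub_one {g φ : ℝ → ℝ} {p : ℝ} (hg : HasDerivAt g 0 0)
    (hφ : HasDerivAt φ p 0) (hφ₀ : φ 0 = 0) :
    HasDerivAt
      (fun ξ : ℝ => Complex.exp (-Complex.I * ξ) * (g ξ * Complex.exp (Complex.I * φ ξ) - 1))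
      (Complex.I * ((1 - g 0 + g 0 * p : ℝ) : ℂ)) 0 := by
  have hrot : HasDerivAt (fun ξ : ℝ => Complex.exp (-Complex.I * ξ)) (-Complex.I) 0 := by
    simpa using ((hasDerivAt_id (0 : ℝ)).ofReal_comp.const_mul (-Complex.I)).cexp
  have hphase := (hφ.ofReal_comp.const_mul Complex.I).cexp
  have := hrot.mul ((hg.ofReal_comp.mul hphase).sub_const 1)
  refine this.congr_deriv ?_
  simp [hφ₀]
  ring

section SFB

variable {ν : ℝ}

@[simp] theorem sfbPhi_zero (ν : ℝ) : sfbPhi ν 0 = 0 := by simp [sfbPhi]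

theorem sfbSigma_sq (hν : ν ^ 2 ≤ 2) : sfbSigma ν ^ 2 = ν ^ 2 * (2 - ν ^ 2) := by
  rw [sfbSigma, mul_pow, sq_sqrt (by linarith)]

theorem sfbSigma_pos (hν₀ : 0 < ν) (hν : ν ^ 2 < 2) : 0 < sfbSigma ν :=
  mul_pos hν₀ (sqrt_pos.mpr (by linarith))

theorem sfbSigma_lt (hν₀ : 0 < ν) : sfbSigma ν < ν * √2 :=
  mul_lt_mul_of_pos_left ((sqrt_lt_sqrt_iff_of_pos two_pos).mpr (by nlinarith)) hν₀

theorem sfbG_denom_pos (hν₀ : 0 < ν) (τ : ℝ) : 0 < ν * √2 - sfbSigma ν * cos (ν * τ) := by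
  have hσ : 0 ≤ sfbSigma ν := mul_nonneg hν₀.le (sqrt_nonneg _)
  nlinarith [sfbSigma_lt hν₀, cos_le_one (ν * τ)]

theorem sfbG_zero (hν : ν ^ 2 ≤ 2) (τ : ℝ) :
    sfbG ν 0 τ = ν * √2 * ν ^ 2 / (ν * √2 - sfbSigma ν * cos (ν * τ)) := by
  have hP : 2 * ν ^ 2 * cosh (sfbSigma ν * 0) ^ 2 - sfbSigma ν ^ 2 = (ν ^ 2) ^ 2 := by
    rw [sfbSigma_sq hν]; simp; ring
  rw [sfbG, hP, sqrt_sq (sq_nonneg ν)]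
  simp

theorem continuous_sfbG_zero (hν₀ : 0 < ν) (hν : ν ^ 2 ≤ 2) : Continuous fun τ => sfbG ν 0 τ := by
  simp_rw [sfbG_zero hν]
  exact continuous_const.div (by fun_prop) fun τ => (sfbG_denom_pos hν₀ τ).ne'

theorem sfbA_zero (ν τ : ℝ) : sfbA ν 0 τ = ((sfbG ν 0 τ - 1 : ℝ) : ℂ) := by
  simp [sfbA]

theorem sfbA_zero_eq_zero_iff {τ : ℝ} : sfbA ν 0 τ = 0 ↔ sfbG ν 0 τ = 1 := by
  rw [sfbA_zero, Complex.ofReal_eq_zero, sub_eq_zero]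

theorem cos_eq_of_sfbG_zero_eq (hν₀ : 0 < ν) (hν : ν ^ 2 < 2) {τ τ' : ℝ}
    (h : sfbG ν 0 τ = sfbG ν 0 τ') : cos (ν * τ) = cos (ν * τ') := by
  have hd := (sfbG_denom_pos hν₀ τ).ne'
  have hd' := (sfbG_denom_pos hν₀ τ').ne'
  rw [sfbG_zero hν.le, sfbG_zero hν.le, div_eq_div_iff hd hd'] at h
  have hc : ν * √2 * ν ^ 2 ≠ 0 := by positivity
  have hden : ν * √2 - sfbSigma ν * cos (ν * τ') = ν * √2 - sfbSigma ν * cos (ν * τ) :=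
    mul_left_cancel₀ hc h
  exact mul_left_cancel₀ (sfbSigma_pos hν₀ hν).ne' (by linarith)

theorem sin_ne_zero_of_sfbG_zero_eq_one (hν₀ : 0 < ν) (hν : ν ^ 2 < 2) (hν' : ν ^ 2 ≠ 3 / 2)
    {τ : ℝ} (h : sfbG ν 0 τ = 1) : sin (ν * τ) ≠ 0 := by
  intro hsin
  have hcos : sfbSigma ν * cos (ν * τ) = ν * √2 * (1 - ν ^ 2) := by
    rw [sfbG_zero hν.le, div_eq_one_iff_eq (sfbG_denom_pos hν₀ τ).ne'] at h
    linarith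
  have hcos_sq : cos (ν * τ) ^ 2 = 1 := by nlinarith [sin_sq_add_cos_sq (ν * τ)]
  have hsq := congrArg (· ^ 2) hcos
  simp only [mul_pow, hcos_sq, sfbSigma_sq hν.le, sq_sqrt zero_le_two] at hsq
  have : ν ^ 2 * ν ^ 2 * (2 * ν ^ 2 - 3) = 0 := by linarith
  have hν2 : ν ^ 2 ≠ 0 := by positivity
  have : 2 * ν ^ 2 = 3 := by simpa [hν2, sub_eq_zero] using this
  exact hν' (by linarith)

theorem eventually_sfbG_zero_ne_one (hν₀ : 0 < ν) (hν : ν ^ 2 < 2) (hν' : ν ^ 2 ≠ 3 / 2)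
    {τ₀ : ℝ} (h : sfbG ν 0 τ₀ = 1) : ∀ᶠ τ in 𝓝[≠] τ₀, sfbG ν 0 τ ≠ 1 := by
  have hcos : HasDerivAt (fun τ => cos (ν * τ)) (-sin (ν * τ₀) * ν) τ₀ :=
    (hasDerivAt_cos _).comp τ₀ ((hasDerivAt_id τ₀).const_mul ν |>.congr_deriv (mul_one ν))
  filter_upwards [hcos.eventually_ne (by simp [sin_ne_zero_of_sfbG_zero_eq_one hν₀ hν hν' h,
    hν₀.ne'])] with τ hτ hG
  exact hτ (cos_eq_of_sfbG_zero_eq hν₀ hν (hG.trans h.symm))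

theorem hasDerivAt_sfbG_zero (hν₀ : 0 < ν) (hν : ν ^ 2 ≤ 2) (τ : ℝ) :
    HasDerivAt (fun ξ => sfbG ν ξ τ) 0 0 := by
  have hP : 2 * ν ^ 2 * 1 ^ 2 - sfbSigma ν ^ 2 ≠ 0 := by
    rw [sfbSigma_sq hν]; ring_nf; positivity
  have hQ : ν * √2 * 1 - sfbSigma ν * cos (ν * τ) ≠ 0 := by
    rw [mul_one]; exact (sfbG_denom_pos hν₀ τ).ne'
  exact hasDerivAt_comp_cosh_mul_zero
    (f := fun c => ν * √2 * √(2 * ν ^ 2 * c ^ 2 - sfbSigma ν ^ 2) /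
      (ν * √2 * c - sfbSigma ν * cos (ν * τ)))
    (by fun_prop (disch := assumption)) (sfbSigma ν)

theorem hasDerivAt_sfbPhi_zero (ν : ℝ) : HasDerivAt (sfbPhi ν) (-(sfbSigma ν ^ 2 / ν ^ 2)) 0 := by
  have := (hasDerivAt_tanh_mul_zero (sfbSigma ν)).const_mul (-(sfbSigma ν / ν ^ 2))
  exact (this.arctan).congr_deriv (by simp; ring)

theorem hasDerivAt_sfbA_zero (hν₀ : 0 < ν) (hν : ν ^ 2 ≤ 2) (τ : ℝ) :
    HasDerivAt (fun ξ => sfbA ν ξ τ)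
      (Complex.I * ((1 - sfbG ν 0 τ - sfbG ν 0 τ * (sfbSigma ν ^ 2 / ν ^ 2) : ℝ) : ℂ)) 0 := by
  refine (hasDerivAt_cexp_neg_I_mul_sub_one (hasDerivAt_sfbG_zero hν₀ hν τ)
    (hasDerivAt_sfbPhi_zero ν) (sfbPhi_zero ν)).congr_deriv ?_
  congr 2
  ring

theorem sfb_abs_wavenumber_zero_eq (hν₀ : 0 < ν) (hν : ν ^ 2 ≤ 2) (τ : ℝ) :
    |((starRingEnd ℂ) (sfbA ν 0 τ) * deriv (fun x => sfbA ν x τ) 0).im| / ‖sfbA ν 0 τ‖ ^ 2 =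
      |1 - sfbG ν 0 τ - sfbG ν 0 τ * (sfbSigma ν ^ 2 / ν ^ 2)| / |sfbG ν 0 τ - 1| := by
  rw [(hasDerivAt_sfbA_zero hν₀ hν τ).deriv, sfbA_zero, abs_im_conj_ofReal_mul_I_ofReal_div]

theorem tendsto_sfb_abs_wavenumber_atTop (hν₀ : 0 < ν) (hν : ν ^ 2 < 2) (hν' : ν ^ 2 ≠ 3 / 2)
    {τ₀ : ℝ} (hsing : sfbA ν 0 τ₀ = 0) :
    Tendsto (fun τ => |((starRingEnd ℂ) (sfbA ν 0 τ) * deriv (fun x => sfbA ν x τ) 0).im| /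
      ‖sfbA ν 0 τ‖ ^ 2) (𝓝[≠] τ₀) atTop := by
  have hG₀ : sfbG ν 0 τ₀ = 1 := sfbA_zero_eq_zero_iff.mp hsing
  have hG : Tendsto (fun τ => sfbG ν 0 τ) (𝓝[≠] τ₀) (𝓝 1) :=
    hG₀ ▸ ((continuous_sfbG_zero hν₀ hν.le).tendsto τ₀).mono_left nhdsWithin_le_nhds
  have hr : 0 < sfbSigma ν ^ 2 / ν ^ 2 := by
    have := sfbSigma_pos hν₀ hν
    positivity
  simp_rw [sfb_abs_wavenumber_zero_eq hν₀ hν.le]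
  refine Tendsto.abs_div_abs_atTop (c := -(sfbSigma ν ^ 2 / ν ^ 2)) ?_ (neg_ne_zero.mpr hr.ne')
    ?_ ?_
  · simpa using ((tendsto_const_nhds (x := (1 : ℝ))).sub hG).sub (hG.mul_const _)
  · simpa using hG.sub_const 1
  · filter_upwards [eventually_sfbG_zero_ne_one hν₀ hν hν' hG₀] with τ hτ
    exact sub_ne_zero.mpr hτ

end SFB

/-- For `0 < ν < √(3/2)` and a singular point `A(0,τ₀) = 0` of the SFB,
the local wavenumber `k(τ) = Im(conj(A(0,τ))·(∂ξA)(0,τ))/|A(0,τ)|²` (defined where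
`A(0,τ) ≠ 0`) is unbounded as `τ → τ₀`: for every bound `M` there are points `τ`
arbitrarily close to (but different from) `τ₀` where `|k(τ)| > M`. Consequently the
Chu–Mei quotient of the SFB is unbounded at its singular points. -/
theorem sfb_local_wavenumber_unbounded
    (ν : ℝ) (hν0 : 0 < ν) (hν2 : ν < Real.sqrt (3 / 2))
    (τ₀ : ℝ) (hsing : sfbA ν 0 τ₀ = 0) :
    ∀ M : ℝ, ∃ᶠ τ in 𝓝[≠] τ₀,
      M < |((starRingEnd ℂ) (sfbA ν 0 τ) * deriv (fun x => sfbA ν x τ) 0).im| /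
            ‖sfbA ν 0 τ‖ ^ 2 := by
  have hν : ν ^ 2 < 3 / 2 := (lt_sqrt hν0.le).mp hν2
  have hk := tendsto_sfb_abs_wavenumber_atTop hν0 (by linarith) hν.ne hsing
  exact fun M => (hk.eventually_gt_atTop M).frequently
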